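/- arXiv:2507.11686 — 3 statements merged into one kernel-verified Lean document; each statement's English description precedes it below -/
import Mathlib

section
/- For every x ∈ (0, 1/8], there exists a unique y₄ ∈ (0,1) such that f_x(y₄) = 4. -/
/-- For `x ∈ (0,1]`, the function `f_x(y) = ∑_{i=0}^{⌊1/x⌋} max(i·x + y − 1, 0)`. -/
noncomputable def fx (x y : ℝ) : ℝ :=
  ∑ i ∈ Finset.range (⌊1 / x⌋₊ + 1), max ((i : ℝ) * x + y - 1) 0

/-!
Write `N = ⌊1/x⌋₊`. The function `fx x` is continuous, vanishes at `0` because `i * x ≤ N * x ≤ 1`,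
and `fx x 1 = x * N * (N + 1) / 2 > N / 2 ≥ 4` since `(N + 1) * x > 1` and `N ≥ 8`; the intermediate
value theorem gives a solution in `(0, 1)`. It is unique because `fx x` is strictly increasing wherever
it is positive: a positive sum has a term with `i * x + y - 1 > 0`, and that term grows strictly with `y`.
-/

open Finset

theorem continuous_fx (x : ℝ) : Continuous (fx x) := by
  unfold fx; fun_prop

theorem fx_lt_fx_of_pos {x y₁ y₂ : ℝ} (hpos : 0 < fx x y₁) (hy : y₁ < y₂) :
    fx x y₁ < fx x y₂ := by
  rw [fx, ← sum_const_zero] at hpos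
  obtain ⟨i, hi, hterm⟩ := exists_lt_of_sum_lt hpos
  have hactive : 0 < (i : ℝ) * x + y₁ - 1 := by simpa using hterm
  refine sum_lt_sum (fun j _ => by gcongr) ⟨i, hi, ?_⟩
  rw [max_eq_left hactive.le]
  exact lt_max_of_lt_left (by linarith)

theorem natFloor_inv_mul_le_one {x : ℝ} (hx : 0 < x) : (⌊1 / x⌋₊ : ℝ) * x ≤ 1 :=
  (le_div_iff₀ hx).1 (Nat.floor_le (by positivity))

theorem one_lt_natFloor_inv_add_one_mul {x : ℝ} (hx : 0 < x) : 1 < (⌊1 / x⌋₊ + 1 : ℝ) * x :=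
  (div_lt_iff₀ hx).1 (Nat.lt_floor_add_one _)

theorem fx_zero {x : ℝ} (hx : 0 < x) : fx x 0 = 0 := by
  refine sum_eq_zero fun i hi => max_eq_right ?_
  have hiN : (i : ℝ) ≤ ⌊1 / x⌋₊ := by exact_mod_cast Nat.lt_succ_iff.mp (mem_range.mp hi)
  nlinarith [natFloor_inv_mul_le_one hx]

theorem sum_range_succ_natCast_mul_two (n : ℕ) :
    (∑ i ∈ range (n + 1), (i : ℝ)) * 2 = n * (n + 1) := by
  induction n with
  | zero => simp
  | succ n ih => rw [sum_range_succ, add_mul, ih]; push_cast; ring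

theorem fx_one {x : ℝ} (hx : 0 ≤ x) : fx x 1 * 2 = x * ⌊1 / x⌋₊ * (⌊1 / x⌋₊ + 1) := by
  have : fx x 1 = (∑ i ∈ range (⌊1 / x⌋₊ + 1), (i : ℝ)) * x := by
    rw [fx, sum_mul]
    refine sum_congr rfl fun i _ => ?_
    rw [add_sub_cancel_right, max_eq_left (by positivity)]
  rw [this, mul_right_comm, sum_range_succ_natCast_mul_two]; ring

theorem four_lt_fx_one {x : ℝ} (hx : x ∈ Set.Ioc (0 : ℝ) (1 / 8)) : 4 < fx x 1 := by
  obtain ⟨hx0, hx8⟩ := hx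
  have h8 : (8 : ℝ) ≤ ⌊1 / x⌋₊ := by
    exact_mod_cast Nat.le_floor (by rw [le_div_iff₀ hx0]; push_cast; linarith)
  nlinarith [fx_one hx0.le, one_lt_natFloor_inv_add_one_mul hx0]

theorem stmt_2 (x : ℝ) (hx : x ∈ Set.Ioc (0 : ℝ) (1 / 8)) :
    ∃! y : ℝ, y ∈ Set.Ioo (0 : ℝ) 1 ∧ fx x y = 4 := by
  have h4 : (4 : ℝ) ∈ Set.Ioo (fx x 0) (fx x 1) := ⟨by norm_num [fx_zero hx.1], four_lt_fx_one hx⟩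
  obtain ⟨y, hy, hfy⟩ := intermediate_value_Ioo zero_le_one (continuous_fx x).continuousOn h4
  refine ⟨y, ⟨hy, hfy⟩, fun z ⟨_, hfz⟩ => ?_⟩
  by_contra hne
  rcases lt_or_gt_of_ne hne with h | h
  · linarith [fx_lt_fx_of_pos (by linarith) h]
  · linarith [fx_lt_fx_of_pos (by linarith) h]
end

section
/- Let G be a finite simple graph on n ≥ 1 vertices, let i ∈ ℕ, let λ > 0, and let R ⊆ V be nonempty with |R| = r. Define A = {w ∈ V : |N_i(w) ∩ R| ≥ λ·|N_i(w)|·r/n}. If A is nonempty, then |A| ≤ (n/λ) · (max_{v ∈ R} |N_i(v)|) / (min_{w ∈ A} |N_i(w)|). -/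
/-!
Double counting of the pairs `(w, v) ∈ A × R` with `d(w, v) ≤ i`. Every `w ∈ A` sees at least
`λ · |N_i(w)| · r / n ≥ λ · m · r / n` points of `R`, where `m` is the least ball size on `A`,
while every `v ∈ R` is seen by at most `|N_i(v)| ≤ M` points of `A`, where `M` is the largest
ball size on `R`. Hence `|A| · λ m r / n ≤ r M`.
-/

/-- The ball of radius `i` around `v`: all vertices at graph distance at most `i`
(distance taken in `ℕ∞`, so vertices in other components are excluded). -/
noncomputable def ballF {V : Type*} [Fintype V] (G : SimpleGraph V) (v : V) (i : ℕ) :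
    Finset V :=
  @Finset.filter V (fun w => G.edist v w ≤ (i : ℕ∞)) (Classical.decPred _) Finset.univ

open Finset

section Balls

variable {V : Type*} [Fintype V] (G : SimpleGraph V) (i : ℕ)

lemma mem_ballF_comm (v w : V) : v ∈ ballF G w i ↔ w ∈ ballF G v i := by
  simp [ballF, SimpleGraph.edist_comm]

lemma card_ballF_pos (v : V) : 0 < #(ballF G v i) :=
  card_pos.mpr ⟨v, by simp [ballF]⟩

variable [DecidableEq V]

lemma sum_card_ballF_inter_comm (A R : Finset V) :
    ∑ w ∈ A, #(ballF G w i ∩ R) = ∑ v ∈ R, #(ballF G v i ∩ A) := by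
  have hAbove : ∀ w, ballF G w i ∩ R = R.bipartiteAbove (fun w v => v ∈ ballF G w i) w := by
    intro w
    rw [bipartiteAbove, filter_mem_eq_inter, inter_comm]
  have hBelow : ∀ v, ballF G v i ∩ A = A.bipartiteBelow (fun w v => v ∈ ballF G w i) v := by
    intro v
    simp_rw [bipartiteBelow, mem_ballF_comm G i v, filter_mem_eq_inter, inter_comm]
  simp_rw [hAbove, hBelow]
  exact sum_card_bipartiteAbove_eq_sum_card_bipartiteBelow _

lemma sum_card_ballF_inter_le (A R : Finset V) (hR : R.Nonempty) :
    ∑ w ∈ A, (#(ballF G w i ∩ R) : ℝ) ≤ #R * R.sup' hR fun v => (#(ballF G v i) : ℝ) := by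
  rw [← Nat.cast_sum, sum_card_ballF_inter_comm, Nat.cast_sum, ← nsmul_eq_mul]
  refine sum_le_card_nsmul _ _ _ fun v hv => ?_
  exact le_sup'_of_le _ hv (mod_cast card_le_card inter_subset_left)

end Balls

theorem stmt_9_general {V : Type*} [Fintype V] [DecidableEq V] (G : SimpleGraph V) (n : ℕ)
    (hV : Fintype.card V = n) (i : ℕ) (lam : ℝ) (hlam : 0 < lam)
    (R : Finset V) (hRne : R.Nonempty) (r : ℕ) (hr : R.card = r)
    (A : Finset V)
    (hA : A = @Finset.filter V
      (fun w => lam * ((ballF G w i).card : ℝ) * (r : ℝ) / (n : ℝ)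
        ≤ (((ballF G w i) ∩ R).card : ℝ))
      (Classical.decPred _) Finset.univ)
    (hAne : A.Nonempty) :
    (A.card : ℝ) ≤ ((n : ℝ) / lam) *
        (R.sup' hRne fun v => ((ballF G v i).card : ℝ)) /
        (A.inf' hAne fun w => ((ballF G w i).card : ℝ)) := by
  set M : ℝ := R.sup' hRne fun v => (#(ballF G v i) : ℝ)
  set m : ℝ := A.inf' hAne fun w => (#(ballF G w i) : ℝ)
  have hm : 0 < m := (lt_inf'_iff _).mpr fun w _ => mod_cast card_ballF_pos G i w
  have hn : (0 : ℝ) < n := by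
    rw [← hV]
    exact mod_cast hAne.card_pos.trans_le (card_le_univ A)
  have hr_pos : (0 : ℝ) < r := by
    rw [← hr]
    exact mod_cast hRne.card_pos
  have hcount : #A • (lam * m * r / n) ≤ r * M := by
    refine (card_nsmul_le_sum _ _ _ fun w hw => ?_).trans
      (hr ▸ sum_card_ballF_inter_le G i A R hRne)
    have hmw : m ≤ #(ballF G w i) := inf'_le _ hw
    have hw_dense : lam * #(ballF G w i) * r / n ≤ #(ballF G w i ∩ R) := by
      rw [hA] at hw
      exact (mem_filter.mp hw).2
    refine le_trans ?_ hw_dense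
    gcongr
  have hkey : #A * (lam * m) ≤ n * M := by
    rw [nsmul_eq_mul, mul_div_assoc', div_le_iff₀ hn] at hcount
    refine le_of_mul_le_mul_left ?_ hr_pos
    linarith
  rw [div_mul_eq_mul_div, div_div, le_div_iff₀ (by positivity)]
  linarith

theorem stmt_9 {V : Type*} [Fintype V] [DecidableEq V] (G : SimpleGraph V) (n : ℕ) (hn : 1 ≤ n)
    (hV : Fintype.card V = n) (i : ℕ) (lam : ℝ) (hlam : 0 < lam)
    (R : Finset V) (hRne : R.Nonempty) (r : ℕ) (hr : R.card = r)
    (A : Finset V)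
    (hA : A = @Finset.filter V
      (fun w => lam * ((ballF G w i).card : ℝ) * (r : ℝ) / (n : ℝ)
        ≤ (((ballF G w i) ∩ R).card : ℝ))
      (Classical.decPred _) Finset.univ)
    (hAne : A.Nonempty) :
    (A.card : ℝ) ≤ ((n : ℝ) / lam) *
        (R.sup' hRne fun v => ((ballF G v i).card : ℝ)) /
        (A.inf' hAne fun w => ((ballF G w i).card : ℝ)) :=
  stmt_9_general G n hV i lam hlam R hRne r hr A hA hAne
end

section
/- Let x ∈ (1/2, 1) be fixed and let p : ℕ → [0,1] satisfy d = n^{x+O(1/log n)} where d(n) = (n−1)·p(n). Then the probability that the binomial random graph G(n, p(n)) has no multiset resolving set at all (i.e., that its multiset metric dimension is ∞) tends to 1 as n → ∞. -/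
open MeasureTheory Filter

/-- The binomial random graph measure `G(n,p)`: each of the possible edges (unordered
pairs of vertices of `Fin n`) appears independently with probability `p`.  The sample
space records for each unordered pair whether it is an edge.  (When `p ∈ [0,1]`,
`min (ENNReal.ofReal p) 1 = ENNReal.ofReal p`.) -/
noncomputable def gnp (n : ℕ) (p : ℝ) : Measure (Sym2 (Fin n) → Bool) :=
  Measure.pi fun _ =>
    (PMF.bernoulli (min (Real.toNNReal p) 1) (min_le_right _ _)).toMeasure

/-- The simple graph on `Fin n` determined by an outcome `ω` of the edge indicators. -/
def graphOf {n : ℕ} (ω : Sym2 (Fin n) → Bool) : SimpleGraph (Fin n) :=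
  SimpleGraph.fromRel fun v w => ω s(v, w) = true

/-- The multiset of distances from `v` to the vertices of `R` (with multiplicity),
distances taken in `ℕ∞`. -/
noncomputable def msig {V : Type*} (G : SimpleGraph V) (R : Finset V) (v : V) :
    Multiset ℕ∞ :=
  R.val.map fun r => G.edist v r

/-- `R` is multiset resolving for `G`. -/
def MsResolving {V : Type*} (G : SimpleGraph V) (R : Finset V) : Prop :=
  ∀ v w : V, v ≠ w → msig G R v ≠ msig G R w

/-!
Since `(n - 1) p ≥ e^{-C₀} n^x` with `x > 1/2`, we have `(n - 2) p² ≥ c n^{2x-1}`, so a union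
bound over pairs gives
`P(some pair has no common neighbour) ≤ n² (1 - p²)^{n-2} ≤ n² exp(-c n^{2x-1}) → 0`:
whp `G(n, p)` has diameter at most 2.

In a graph of diameter at most 2, the distance multiset of `v` to `R` is determined by whether
`v ∈ R` and by the number of neighbours of `v` in `R`. A multiset resolving `R` would therefore make
this degree injective on `R` and on its complement. On `R` the degree takes values in `[0, #R - 1]`,
and `0` and `#R - 1` cannot both occur when `#R ≥ 2`; off `R` it takes at most `#R + 1` values,
fewer than `n - #R` when `#R ≤ 1` and `n ≥ 4`.
-/

open Finset Topology

theorem Multiset.eq_of_card_eq_of_count_eq_of_ne {α : Type*} [DecidableEq α]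
    {s t : Multiset α} {T : Finset α} (c : α) (hs : ∀ a ∈ s, a ∈ T) (ht : ∀ a ∈ t, a ∈ T)
    (hcard : card s = card t) (hcount : ∀ a ∈ T, a ≠ c → count a s = count a t) : s = t := by
  ext a
  by_cases haT : a ∈ T
  · by_cases hac : a = c
    · subst hac
      have hsum : ∀ u : Multiset α, (∀ b ∈ u, b ∈ T) →
          count a u + ∑ b ∈ T.erase a, count b u = card u := fun u hu => by
        rw [Finset.add_sum_erase T (fun b => count b u) haT, Multiset.sum_count_eq_card hu]
      have hrest : ∑ b ∈ T.erase a, count b s = ∑ b ∈ T.erase a, count b t :=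
        Finset.sum_congr rfl fun b hb => hcount b (mem_of_mem_erase hb) (ne_of_mem_erase hb)
      have := hsum s hs
      have := hsum t ht
      omega
    · exact hcount a haT hac
  · rw [count_eq_zero_of_notMem fun h => haT (hs a h),
      count_eq_zero_of_notMem fun h => haT (ht a h)]

namespace SimpleGraph

variable {V : Type*} (G : SimpleGraph V)

theorem count_zero_msig [DecidableEq V] (R : Finset V) (v : V) :
    (msig G R v).count 0 = if v ∈ R then 1 else 0 := by
  simp only [msig, Multiset.count_map, eq_comm (a := (0 : ℕ∞)), edist_eq_zero_iff]
  rw [Multiset.filter_eq, Multiset.card_replicate, Multiset.count_eq_of_nodup R.nodup]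
  rfl

theorem count_one_msig [DecidableRel G.Adj] (R : Finset V) (v : V) :
    (msig G R v).count 1 = #{r ∈ R | G.Adj v r} := by
  simp only [msig, Multiset.count_map, eq_comm (a := (1 : ℕ∞)), edist_eq_one_iff_adj]
  rfl

theorem msig_eq_msig_of_ediam_le_two [DecidableEq V] [DecidableRel G.Adj] (hG : G.ediam ≤ 2)
    {R : Finset V} {v w : V} (hR : v ∈ R ↔ w ∈ R)
    (hdeg : #{r ∈ R | G.Adj v r} = #{r ∈ R | G.Adj w r}) : msig G R v = msig G R w := by
  have hmem : ∀ u, ∀ d ∈ msig G R u, d ∈ ({0, 1, 2} : Finset ℕ∞) := by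
    intro u d hd
    obtain ⟨r, -, rfl⟩ := Multiset.mem_map.1 hd
    have h2 : G.edist u r ≤ 2 := (edist_le_ediam).trans hG
    lift G.edist u r to ℕ using ne_top_of_le_ne_top (by decide) h2 with m
    norm_cast at h2
    interval_cases m <;> simp
  refine Multiset.eq_of_card_eq_of_count_eq_of_ne 2 (hmem v) (hmem w) (by simp [msig]) ?_
  intro d hd hd2
  simp only [mem_insert, mem_singleton, hd2, or_false] at hd
  rcases hd with rfl | rfl
  · simp only [count_zero_msig, hR]
  · simp only [count_one_msig, hdeg]

theorem injOn_card_filter_adj_of_msResolving [DecidableEq V] [DecidableRel G.Adj] {R : Finset V}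
    (hR : MsResolving G R) (hG : G.ediam ≤ 2) {S : Set V} (hS : ∀ v ∈ S, ∀ w ∈ S, v ∈ R ↔ w ∈ R) :
    S.InjOn fun v => #{r ∈ R | G.Adj v r} := fun v hv w hw h =>
  not_not.1 fun hne => hR v w hne (msig_eq_msig_of_ediam_le_two G hG (hS v hv w hw) h)

theorem not_injOn_card_filter_adj [DecidableEq V] [DecidableRel G.Adj] {R : Finset V}
    (hR : 2 ≤ #R) : ¬ Set.InjOn (fun v => #{r ∈ R | G.Adj v r}) R := by
  intro hinj
  have hsub : ∀ v, {r ∈ R | G.Adj v r} ⊆ R.erase v := fun v r hr =>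
    mem_erase.2 ⟨(G.ne_of_adj (mem_filter.1 hr).2).symm, (mem_filter.1 hr).1⟩
  have himage : R.image (fun v => #{r ∈ R | G.Adj v r}) = range #R := by
    refine eq_of_subset_of_card_le (fun k hk => ?_) (by rw [card_image_of_injOn hinj, card_range])
    obtain ⟨v, hv, rfl⟩ := mem_image.1 hk
    exact mem_range.2 ((card_le_card (hsub v)).trans_lt (card_erase_lt_of_mem hv))
  obtain ⟨u, hu, hu0⟩ := mem_image.1 (himage ▸ mem_range.2 (by omega) : 0 ∈ _)
  obtain ⟨w, hw, hwfull⟩ := mem_image.1 (himage ▸ mem_range.2 (by omega) : #R - 1 ∈ _)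
  have huw : u ≠ w := by rintro rfl; omega
  have hw_adj : {r ∈ R | G.Adj w r} = R.erase w :=
    eq_of_subset_of_card_le (hsub w) (by rw [card_erase_of_mem hw, hwfull])
  have hadj : G.Adj u w := (mem_filter.1 (hw_adj ▸ mem_erase.2 ⟨huw, hu⟩ : u ∈ _)).2.symm
  exact (card_pos.2 ⟨w, mem_filter.2 ⟨hw, hadj⟩⟩).ne' hu0

theorem not_msResolving_of_ediam_le_two [Fintype V] (hV : 4 ≤ Fintype.card V)
    (hG : G.ediam ≤ 2) (R : Finset V) : ¬ MsResolving G R := by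
  classical
  intro hR
  by_cases hR2 : 2 ≤ #R
  · refine not_injOn_card_filter_adj G hR2 (injOn_card_filter_adj_of_msResolving G hR hG ?_)
    intro v hv w hw
    simp only [mem_coe] at hv hw
    simp [hv, hw]
  · have hmaps : Set.MapsTo (fun v => #{r ∈ R | G.Adj v r}) ↑Rᶜ ↑(range (#R + 1)) :=
      fun v _ => mem_range.2 (Nat.lt_succ_of_le (card_filter_le _ _))
    have hcard := card_le_card_of_injOn _ hmaps <|
      injOn_card_filter_adj_of_msResolving G hR hG fun v hv w hw => by
        simp only [coe_compl, Set.mem_compl_iff, mem_coe] at hv hw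
        simp [hv, hw]
    rw [card_compl, card_range] at hcard
    omega

theorem ediam_le_two_of_forall_exists_adj_adj
    (h : ∀ v w, v ≠ w → ∃ u, G.Adj v u ∧ G.Adj u w) : G.ediam ≤ 2 := by
  refine ediam_le_iff.2 fun v w => ?_
  rcases eq_or_ne v w with rfl | hvw
  · simp
  obtain ⟨u, hvu, huw⟩ := h v w hvw
  calc G.edist v w ≤ G.edist v u + G.edist u w := G.edist_triangle
    _ = 2 := by rw [edist_eq_one_iff_adj.2 hvu, edist_eq_one_iff_adj.2 huw]; rfl

end SimpleGraph

theorem MeasureTheory.Measure.map_pi_pi_of_injective {ι κ α : Type*} [Fintype ι] [Fintype κ]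
    [MeasurableSpace α] (ν : Measure α) [IsProbabilityMeasure ν] {f : κ → ι}
    (hf : Function.Injective f) :
    (Measure.pi fun _ : ι => ν).map (fun ω k => ω (f k)) = Measure.pi fun _ : κ => ν := by
  rw [← Measure.infinitePi_eq_pi, ← Measure.infinitePi_eq_pi,
    Measure.map_infinitePi_infinitePi_of_inj hf]

theorem measure_pi_forall_block_mem {ι κ J α : Type*} [Fintype ι] [Fintype κ] [Fintype J]
    [MeasurableSpace α] (ν : Measure α) [IsProbabilityMeasure ν] {f : κ × J → ι}
    (hf : Function.Injective f) {A : Set (J → α)} (hA : MeasurableSet A) :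
    Measure.pi (fun _ : ι => ν) {ω | ∀ k, (fun j => ω (f (k, j))) ∈ A} =
      Measure.pi (fun _ : J => ν) A ^ Fintype.card κ := by
  have hmap : (Measure.pi fun _ : ι => ν).map
      (MeasurableEquiv.curry κ J α ∘ fun ω z => ω (f z)) =
        Measure.pi fun _ : κ => Measure.pi fun _ : J => ν := by
    rw [← Measure.map_map (MeasurableEquiv.curry κ J α).measurable (by fun_prop),
      Measure.map_pi_pi_of_injective ν hf, ← Measure.infinitePi_eq_pi,
      Measure.infinitePi_map_curry (fun _ _ => ν)]
    simp only [Measure.infinitePi_eq_pi]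
  have hset : {ω : ι → α | ∀ k, (fun j => ω (f (k, j))) ∈ A} =
      (MeasurableEquiv.curry κ J α ∘ fun ω z => ω (f z)) ⁻¹' Set.univ.pi fun _ => A := by
    ext ω
    simp only [Set.mem_ofPred_eq, Set.mem_preimage, Set.mem_univ_pi]
    rfl
  rw [hset, ← Measure.map_apply (by fun_prop) (.univ_pi fun _ => hA), hmap, Measure.pi_pi,
    Finset.prod_const, Finset.card_univ]

theorem measure_pi_bool_not_and (ν : Measure Bool) [IsProbabilityMeasure ν] :
    Measure.pi (fun _ : Bool => ν) {g | ¬(g false = true ∧ g true = true)} =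
      1 - ν {true} ^ 2 := by
  have hcompl : {g : Bool → Bool | ¬(g false = true ∧ g true = true)}ᶜ =
      Set.univ.pi fun _ => {true} := by
    ext g
    simp
  rw [← compl_compl {g : Bool → Bool | _}, prob_compl_eq_one_sub (Set.toFinite _).measurableSet]
  rw [hcompl, Measure.pi_pi, Finset.prod_const, Finset.card_univ, Fintype.card_bool]

theorem measure_pi_no_common_neighbor {V : Type*} [Fintype V] [DecidableEq V]
    (ν : Measure Bool) [IsProbabilityMeasure ν] {v w : V} (hvw : v ≠ w) :
    Measure.pi (fun _ : Sym2 V => ν)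
        {ω | ∀ u, u ≠ v → u ≠ w → ¬(ω s(v, u) = true ∧ ω s(u, w) = true)} =
      (1 - ν {true} ^ 2) ^ (Fintype.card V - 2) := by
  let f : {u // u ≠ v ∧ u ≠ w} × Bool → Sym2 V := fun z => bif z.2 then s(z.1.1, w) else s(v, z.1.1)
  have hf : Function.Injective f := by
    rintro ⟨⟨u, hu⟩, _ | _⟩ ⟨⟨u', hu'⟩, _ | _⟩ h <;>
      simp only [f, cond_false, cond_true, Sym2.eq_iff, Prod.mk.injEq, Subtype.mk.injEq] at h ⊢ <;>
      grind
  have hset :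
      {ω : Sym2 V → Bool | ∀ u, u ≠ v → u ≠ w → ¬(ω s(v, u) = true ∧ ω s(u, w) = true)} =
        {ω | ∀ k, (fun j => ω (f (k, j))) ∈
          {g : Bool → Bool | ¬(g false = true ∧ g true = true)}} := by
    ext ω
    simp [f]
  have hcard : Fintype.card {u // u ≠ v ∧ u ≠ w} = Fintype.card V - 2 := by
    rw [Fintype.card_subtype, ← Finset.card_pair hvw, ← Finset.card_compl]
    congr 1
    ext u
    simp
  rw [hset, measure_pi_forall_block_mem ν hf (Set.toFinite _).measurableSet,
    measure_pi_bool_not_and, hcard]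

theorem Real.rpow_sub_div_log {y : ℝ} (hy : 1 < y) (x C : ℝ) :
    y ^ (x - C / Real.log y) = Real.exp (-C) * y ^ x := by
  have hlog : Real.log y ≠ 0 := (Real.log_pos hy).ne'
  rw [Real.rpow_sub (by linarith), Real.rpow_def_of_pos (by linarith) (C / _),
    mul_div_cancel₀ C hlog, Real.exp_neg, div_eq_inv_mul]

theorem tendsto_natCast_sq_mul_exp_neg_mul_rpow {c δ : ℝ} (hc : 0 < c) (hδ : 0 < δ) :
    Tendsto (fun n : ℕ => (n : ℝ) ^ 2 * Real.exp (-(c * (n : ℝ) ^ δ))) atTop (𝓝 0) := by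
  have h := (tendsto_rpow_mul_exp_neg_mul_atTop_nhds_zero (2 / δ) c hc).comp
    ((tendsto_rpow_atTop hδ).comp tendsto_natCast_atTop_atTop)
  refine h.congr fun n => ?_
  simp only [Function.comp_apply, neg_mul]
  rw [← Real.rpow_mul (Nat.cast_nonneg n), mul_div_cancel₀ 2 hδ.ne', Real.rpow_two]

theorem eventually_mul_rpow_le_natCast_sub_two_mul_sq {x C : ℝ} {p : ℕ → ℝ}
    (hd : ∀ᶠ n : ℕ in atTop, (n : ℝ) ^ (x - C / Real.log n) ≤ ((n : ℝ) - 1) * p n) :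
    ∀ᶠ n : ℕ in atTop,
      0 ≤ p n ∧ Real.exp (-C) ^ 2 / 2 * (n : ℝ) ^ (2 * x - 1) ≤ ((n - 2 : ℕ) : ℝ) * p n ^ 2 := by
  filter_upwards [hd, eventually_ge_atTop 3] with n hn hn3
  have hn' : (3 : ℝ) ≤ n := by exact_mod_cast hn3
  rw [Real.rpow_sub_div_log (by linarith)] at hn
  have hpos : 0 < Real.exp (-C) * (n : ℝ) ^ x := by positivity
  refine ⟨(pos_of_mul_pos_right (hpos.trans_le hn) (by linarith)).le, ?_⟩
  calc Real.exp (-C) ^ 2 / 2 * (n : ℝ) ^ (2 * x - 1)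
      = (Real.exp (-C) * (n : ℝ) ^ x) ^ 2 / (2 * n) := by
        rw [Real.rpow_sub (by linarith), Real.rpow_one, mul_comm 2 x,
          Real.rpow_mul (by linarith), Real.rpow_two]
        ring
    _ ≤ (((n : ℝ) - 1) * p n) ^ 2 / (2 * n) := by gcongr
    _ ≤ ((n - 2 : ℕ) : ℝ) * p n ^ 2 := by
        rw [Nat.cast_sub (by omega), Nat.cast_two, div_le_iff₀ (by positivity)]
        nlinarith [mul_nonneg (sq_nonneg (p n)) (by linarith : (0 : ℝ) ≤ n - 3)]

theorem tendsto_sq_mul_one_sub_sq_pow {x C : ℝ} (hx : 1 / 2 < x) {p : ℕ → ℝ}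
    (hp : ∀ n, p n ≤ 1)
    (hd : ∀ᶠ n : ℕ in atTop, (n : ℝ) ^ (x - C / Real.log n) ≤ ((n : ℝ) - 1) * p n) :
    Tendsto (fun n : ℕ => (n : ℝ) ^ 2 * (1 - p n ^ 2) ^ (n - 2)) atTop (𝓝 0) := by
  set c := Real.exp (-C) ^ 2 / 2
  have hbound := eventually_mul_rpow_le_natCast_sub_two_mul_sq hd
  refine squeeze_zero' ?_ ?_ (tendsto_natCast_sq_mul_exp_neg_mul_rpow (c := c) (by positivity)
    (by linarith : 0 < 2 * x - 1))
  · filter_upwards [hbound] with n hn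
    have : 0 ≤ 1 - p n ^ 2 := by nlinarith [hp n]
    positivity
  · filter_upwards [hbound] with n ⟨hp0, hn⟩
    refine mul_le_mul_of_nonneg_left ?_ (by positivity)
    calc (1 - p n ^ 2) ^ (n - 2) ≤ Real.exp (-p n ^ 2) ^ (n - 2) := by
          gcongr
          · nlinarith [hp n]
          · linarith [Real.add_one_le_exp (-p n ^ 2)]
      _ = Real.exp (-(((n - 2 : ℕ) : ℝ) * p n ^ 2)) := by rw [← Real.exp_nat_mul]; ring_nf
      _ ≤ Real.exp (-(c * (n : ℝ) ^ (2 * x - 1))) := by gcongr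

instance (n : ℕ) (p : ℝ) : IsProbabilityMeasure (gnp n p) := by
  unfold gnp
  infer_instance

theorem exists_gnp_eq_pi (n : ℕ) {p : ℝ} (hp : p ∈ Set.Icc (0 : ℝ) 1) :
    ∃ ν : Measure Bool, IsProbabilityMeasure ν ∧ ν {true} = ENNReal.ofReal p ∧
      gnp n p = Measure.pi fun _ => ν := by
  refine ⟨_, inferInstance, ?_, rfl⟩
  rw [PMF.toMeasure_apply_singleton _ _ (measurableSet_singleton _)]
  simp only [hp.2, min_eq_left, Real.toNNReal_le_one]
  rfl

theorem graphOf_adj {n : ℕ} (ω : Sym2 (Fin n) → Bool) (a b : Fin n) :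
    (graphOf ω).Adj a b ↔ a ≠ b ∧ ω s(a, b) = true := by
  simp [graphOf, Sym2.eq_swap]

theorem gnp_two_lt_ediam_le (n : ℕ) {p : ℝ} (hp : p ∈ Set.Icc (0 : ℝ) 1) :
    gnp n p {ω | 2 < (graphOf ω).ediam} ≤
      ENNReal.ofReal ((n : ℝ) ^ 2 * (1 - p ^ 2) ^ (n - 2)) := by
  obtain ⟨ν, _, hν, hgnp⟩ := exists_gnp_eq_pi n hp
  have hsub : {ω | 2 < (graphOf ω).ediam} ⊆ ⋃ z ∈ (univ.offDiag : Finset (Fin n × Fin n)),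
      {ω | ∀ u, u ≠ z.1 → u ≠ z.2 → ¬(ω s(z.1, u) = true ∧ ω s(u, z.2) = true)} := by
    intro ω hω
    by_contra hnot
    simp only [Set.mem_iUnion, mem_offDiag, mem_univ, true_and, Set.mem_ofPred_eq, not_exists,
      not_forall, not_not] at hnot
    refine not_le.2 hω (SimpleGraph.ediam_le_two_of_forall_exists_adj_adj _ fun v w hvw => ?_)
    obtain ⟨u, hv, hw, hvu, huw⟩ := hnot (v, w) hvw
    exact ⟨u, (graphOf_adj ω v u).2 ⟨Ne.symm hv, hvu⟩, (graphOf_adj ω u w).2 ⟨hw, huw⟩⟩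
  have hp2 : 0 ≤ 1 - p ^ 2 := by nlinarith [hp.1, hp.2]
  calc gnp n p {ω | 2 < (graphOf ω).ediam}
      ≤ ∑ z ∈ (univ.offDiag : Finset (Fin n × Fin n)), gnp n p
          {ω | ∀ u, u ≠ z.1 → u ≠ z.2 → ¬(ω s(z.1, u) = true ∧ ω s(u, z.2) = true)} :=
        (measure_mono hsub).trans (measure_biUnion_finset_le _ _)
    _ = #(univ.offDiag : Finset (Fin n × Fin n)) * ENNReal.ofReal ((1 - p ^ 2) ^ (n - 2)) := by
        rw [← nsmul_eq_mul, ← sum_const]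
        refine sum_congr rfl fun z hz => ?_
        rw [hgnp, measure_pi_no_common_neighbor ν (mem_offDiag.1 hz).2.2, hν, Fintype.card_fin,
          ENNReal.ofReal_pow hp2, ENNReal.ofReal_sub _ (sq_nonneg p), ENNReal.ofReal_one,
          ENNReal.ofReal_pow hp.1]
    _ ≤ ENNReal.ofReal ((n : ℝ) ^ 2 * (1 - p ^ 2) ^ (n - 2)) := by
        rw [ENNReal.ofReal_mul (by positivity), ← Nat.cast_pow, ENNReal.ofReal_natCast]
        gcongr
        rw [offDiag_card, card_univ, Fintype.card_fin]
        exact (Nat.sub_le _ _).trans (sq n).ge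

theorem stmt_12 (x : ℝ) (hx : x ∈ Set.Ioo (1 / 2 : ℝ) 1)
    (p : ℕ → ℝ) (hp : ∀ n, p n ∈ Set.Icc (0 : ℝ) 1)
    (hd : ∃ C₀ > (0 : ℝ), ∀ᶠ n : ℕ in Filter.atTop,
      (n : ℝ) ^ (x - C₀ / Real.log n) ≤ ((n : ℝ) - 1) * p n ∧
      ((n : ℝ) - 1) * p n ≤ (n : ℝ) ^ (x + C₀ / Real.log n)) :
    Tendsto (fun n : ℕ =>
        gnp n (p n) {ω | ∀ R : Finset (Fin n), ¬ MsResolving (graphOf ω) R})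
      atTop (nhds 1) := by
  obtain ⟨C₀, -, hd⟩ := hd
  have hdiam : Tendsto (fun n => gnp n (p n) {ω | 2 < (graphOf ω).ediam}) atTop (𝓝 0) := by
    refine tendsto_of_tendsto_of_tendsto_of_le_of_le tendsto_const_nhds ?_ (fun _ => zero_le)
      fun n => gnp_two_lt_ediam_le n (hp n)
    simpa using ENNReal.tendsto_ofReal (tendsto_sq_mul_one_sub_sq_pow hx.1 (fun n => (hp n).2)
      (hd.mono fun _ h => h.1))
  have hlower : ∀ᶠ n in atTop, 1 - gnp n (p n) {ω | 2 < (graphOf ω).ediam} ≤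
      gnp n (p n) {ω | ∀ R : Finset (Fin n), ¬ MsResolving (graphOf ω) R} := by
    filter_upwards [eventually_ge_atTop 4] with n hn
    rw [← prob_compl_eq_one_sub (Set.toFinite _).measurableSet]
    exact measure_mono fun ω hω => SimpleGraph.not_msResolving_of_ediam_le_two _
      (by rwa [Fintype.card_fin]) (not_lt.1 hω)
  refine tendsto_of_tendsto_of_tendsto_of_le_of_le' ?_ tendsto_const_nhds hlower
    (.of_forall fun _ => prob_le_one)
  simpa using ENNReal.Tendsto.sub tendsto_const_nhds hdiam (.inl ENNReal.one_ne_top)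
end
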